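/- Let f : [0,∞) → ℝ be continuous and bounded, and let F(s) = ∫_0^∞ e^{−sx} f(x) dx denote its Laplace transform, defined for s > 0. Then for every x > 0, f(x) = lim_{m→∞} ((−1)^m/m!)·(m/x)^{m+1}·F^{(m)}(m/x), where F^{(m)} denotes the m-th derivative of F (Post's inversion formula for the Laplace transform). -/

import Mathlib

open MeasureTheory Set Real Filter Topology
open scoped Nat

/-!
Differentiating under the integral sign gives `F⁽ᵐ⁾(s) = (-1)ᵐ ∫ tᵐ e^{-st} f(t) dt`, so the `m`-th
Post approximant at `x` is the average of `f` against the Gamma density of shape `m + 1` and rate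
`m / x`. These densities have mass one and second moment about `x` equal to `x² (m + 2) / m² → 0`,
so they concentrate at `x`: near `x` continuity of `f` controls the average, and away from `x` the
bound on `f` together with Chebyshev's inequality does.
-/

lemma integrableOn_pow_mul_exp_neg_mul (n : ℕ) {b : ℝ} (hb : 0 < b) :
    IntegrableOn (fun t : ℝ => t ^ n * exp (-(b * t))) (Ioi 0) := by
  refine (integrableOn_rpow_mul_exp_neg_mul_rpow (s := n) (p := 1)
    (neg_one_lt_zero.trans_le n.cast_nonneg) one_pos hb).congr_fun (fun t _ => ?_) measurableSet_Ioi
  simp only [rpow_natCast, rpow_one, neg_mul]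

lemma integral_pow_mul_exp_neg_mul (n : ℕ) {b : ℝ} (hb : 0 < b) :
    ∫ t in Ioi 0, t ^ n * exp (-(b * t)) = n ! / b ^ (n + 1) := by
  have h := integral_rpow_mul_exp_neg_mul_Ioi (a := n + 1) (by positivity) hb
  rw [add_sub_cancel_right, Gamma_nat_eq_factorial, ← Nat.cast_succ] at h
  simp only [rpow_natCast] at h
  rw [h, one_div_pow]
  field_simp

/-- The density of the Gamma distribution with shape `n + 1` and rate `b`. -/
noncomputable def gammaKernel (n : ℕ) (b t : ℝ) : ℝ := b ^ (n + 1) / n ! * (t ^ n * exp (-(b * t)))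

section GammaKernel

variable {n : ℕ} {b : ℝ}

lemma gammaKernel_nonneg (hb : 0 ≤ b) {t : ℝ} (ht : 0 ≤ t) : 0 ≤ gammaKernel n b t := by
  unfold gammaKernel; positivity

lemma integrableOn_pow_mul_gammaKernel (j : ℕ) (hb : 0 < b) :
    IntegrableOn (fun t => t ^ j * gammaKernel n b t) (Ioi 0) := by
  refine IntegrableOn.congr_fun
    ((integrableOn_pow_mul_exp_neg_mul (n + j) hb).const_mul (b ^ (n + 1) / n !))
    (fun t _ => ?_) measurableSet_Ioi
  simp only [gammaKernel]; ring

lemma integral_pow_mul_gammaKernel (j : ℕ) (hb : 0 < b) :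
    ∫ t in Ioi 0, t ^ j * gammaKernel n b t = (n + j)! / (n ! * b ^ j) := by
  have h : (fun t => t ^ j * gammaKernel n b t)
      = fun t => b ^ (n + 1) / n ! * (t ^ (n + j) * exp (-(b * t))) := by
    ext t; simp only [gammaKernel]; ring
  rw [h, integral_const_mul, integral_pow_mul_exp_neg_mul _ hb]
  field_simp
  ring

lemma integral_gammaKernel (hb : 0 < b) : ∫ t in Ioi 0, gammaKernel n b t = 1 := by
  simpa [Nat.factorial_ne_zero] using integral_pow_mul_gammaKernel (n := n) 0 hb

lemma integrableOn_gammaKernel (hb : 0 < b) : IntegrableOn (gammaKernel n b) (Ioi 0) := by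
  simpa using integrableOn_pow_mul_gammaKernel (n := n) 0 hb

lemma integral_gammaKernel_mul (f : ℝ → ℝ) :
    ∫ t in Ioi 0, gammaKernel n b t * f t
      = b ^ (n + 1) / n ! * ∫ t in Ioi 0, t ^ n * exp (-(b * t)) * f t := by
  simp_rw [gammaKernel, mul_assoc, integral_const_mul]

-- Stated with `t ^ 1` and `t ^ 0` so that `integral_pow_mul_gammaKernel` applies termwise.
lemma sub_sq_mul_gammaKernel (x t : ℝ) : (t - x) ^ 2 * gammaKernel n b t
    = t ^ 2 * gammaKernel n b t - 2 * x * (t ^ 1 * gammaKernel n b t)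
      + x ^ 2 * (t ^ 0 * gammaKernel n b t) := by
  ring

lemma integrableOn_sub_sq_mul_gammaKernel (x : ℝ) (hb : 0 < b) :
    IntegrableOn (fun t => (t - x) ^ 2 * gammaKernel n b t) (Ioi 0) := by
  simp_rw [sub_sq_mul_gammaKernel x]
  exact ((integrableOn_pow_mul_gammaKernel 2 hb).sub
    ((integrableOn_pow_mul_gammaKernel 1 hb).const_mul _)).add
    ((integrableOn_pow_mul_gammaKernel 0 hb).const_mul _)

lemma integral_sub_sq_mul_gammaKernel (x : ℝ) (hb : 0 < b) :
    ∫ t in Ioi 0, (t - x) ^ 2 * gammaKernel n b t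
      = (n + 2) * (n + 1) / b ^ 2 - 2 * x * (n + 1) / b + x ^ 2 := by
  have h0 := integrableOn_pow_mul_gammaKernel (n := n) 0 hb
  have h1 := integrableOn_pow_mul_gammaKernel (n := n) 1 hb
  have h2 := integrableOn_pow_mul_gammaKernel (n := n) 2 hb
  simp_rw [sub_sq_mul_gammaKernel x]
  rw [integral_add ?_ (h0.const_mul _), integral_sub h2 (h1.const_mul _),
    integral_const_mul, integral_const_mul, integral_pow_mul_gammaKernel 0 hb,
    integral_pow_mul_gammaKernel 1 hb, integral_pow_mul_gammaKernel 2 hb]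
  · push_cast [add_zero, Nat.factorial_succ]
    field_simp
    ring
  · exact h2.sub (h1.const_mul _)

lemma tendsto_integral_sub_sq_mul_gammaKernel {x : ℝ} (hx : 0 < x) :
    Tendsto (fun m : ℕ => ∫ t in Ioi 0, (t - x) ^ 2 * gammaKernel m (m / x) t) atTop (𝓝 0) := by
  have hmoment : ∀ᶠ m : ℕ in atTop, x ^ 2 * ((m : ℝ)⁻¹ + 2 * (m : ℝ)⁻¹ ^ 2)
      = ∫ t in Ioi 0, (t - x) ^ 2 * gammaKernel m (m / x) t := by
    filter_upwards [eventually_gt_atTop 0] with m hm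
    have hm' : (0 : ℝ) < m := Nat.cast_pos.2 hm
    rw [integral_sub_sq_mul_gammaKernel x (by positivity)]
    field_simp
    ring
  refine Tendsto.congr' hmoment ?_
  simpa using (tendsto_inv_atTop_nhds_zero_nat (𝕜 := ℝ).add
    ((tendsto_inv_atTop_nhds_zero_nat.pow 2).const_mul 2)).const_mul (x ^ 2)

end GammaKernel

section LaplaceTransform

variable {f : ℝ → ℝ} {C : ℝ}

lemma hasDerivAt_integral_pow_mul_exp_neg_mul_mul
    (hf : AEStronglyMeasurable f (volume.restrict (Ioi 0)))
    (hC : ∀ᵐ t ∂volume.restrict (Ioi 0), ‖f t‖ ≤ C) (n : ℕ) {s : ℝ} (hs : 0 < s) :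
    HasDerivAt (fun u => ∫ t in Ioi 0, t ^ n * exp (-(u * t)) * f t)
      (-∫ t in Ioi 0, t ^ (n + 1) * exp (-(s * t)) * f t) s := by
  have hmeas (u : ℝ) (k : ℕ) :
      AEStronglyMeasurable (fun t => t ^ k * exp (-(u * t)) * f t) (volume.restrict (Ioi 0)) :=
    (by fun_prop : Continuous fun t : ℝ => t ^ k * exp (-(u * t))).aestronglyMeasurable.mul hf
  have hbound : ∀ᵐ t ∂volume.restrict (Ioi 0), ∀ u ∈ Metric.ball s (s / 2),
      ‖-(t ^ (n + 1) * exp (-(u * t)) * f t)‖ ≤ t ^ (n + 1) * exp (-(s / 2 * t)) * C := by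
    filter_upwards [hC, ae_restrict_mem measurableSet_Ioi] with t hft ht u hu
    have hu : s / 2 ≤ u := by
      linarith [(abs_lt.1 (Real.dist_eq u s ▸ Metric.mem_ball.1 hu)).1]
    have ht : 0 ≤ t := ht.le
    rw [norm_neg, norm_mul, norm_of_nonneg (by positivity)]
    gcongr
  have hderiv : ∀ t : ℝ, ∀ u ∈ Metric.ball s (s / 2),
      HasDerivAt (fun u => t ^ n * exp (-(u * t)) * f t)
        (-(t ^ (n + 1) * exp (-(u * t)) * f t)) u := by
    intro t u _
    have hexp : HasDerivAt (fun u => -(u * t)) (-t) u := (hasDerivAt_mul_const t).neg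
    exact ((hexp.exp.const_mul (t ^ n)).mul_const (f t)).congr_deriv (by ring)
  have key := hasDerivAt_integral_of_dominated_loc_of_deriv_le
    (Metric.ball_mem_nhds s (half_pos hs)) (Eventually.of_forall fun u => hmeas u n)
    (Integrable.mul_bdd (integrableOn_pow_mul_exp_neg_mul n hs) hf hC) (hmeas s (n + 1)).neg
    hbound ((integrableOn_pow_mul_exp_neg_mul (n + 1) (half_pos hs)).mul_const C)
    (Eventually.of_forall hderiv)
  simpa only [integral_neg] using key.2

lemma iteratedDeriv_laplace
    (hf : AEStronglyMeasurable f (volume.restrict (Ioi 0)))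
    (hC : ∀ᵐ t ∂volume.restrict (Ioi 0), ‖f t‖ ≤ C) (m : ℕ) {s : ℝ} (hs : 0 < s) :
    iteratedDeriv m (fun s => ∫ t in Ioi 0, exp (-s * t) * f t) s
      = (-1) ^ m * ∫ t in Ioi 0, t ^ m * exp (-(s * t)) * f t := by
  induction m generalizing s with
  | zero => simp
  | succ m ih =>
    have hev : iteratedDeriv m (fun s => ∫ t in Ioi 0, exp (-s * t) * f t)
        =ᶠ[𝓝 s] fun u => (-1) ^ m * ∫ t in Ioi 0, t ^ m * exp (-(u * t)) * f t :=
      eventually_of_mem (Ioi_mem_nhds hs) fun u hu => ih hu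
    rw [iteratedDeriv_succ, hev.deriv_eq,
      ((hasDerivAt_integral_pow_mul_exp_neg_mul_mul hf hC m hs).const_mul _).deriv, pow_succ]
    ring

end LaplaceTransform

section ApproximateIdentity

lemma abs_sub_le_add_mul_sq {f : ℝ → ℝ} {x t M ε δ : ℝ} (hft : |f t| ≤ M) (hfx : |f x| ≤ M)
    (hε : 0 ≤ ε) (hδ : 0 < δ) (hclose : |t - x| < δ → |f t - f x| ≤ ε) :
    |f t - f x| ≤ ε + 2 * M / δ ^ 2 * (t - x) ^ 2 := by
  have hM : 0 ≤ M := (abs_nonneg _).trans hfx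
  by_cases hnear : |t - x| < δ
  · have : 0 ≤ 2 * M / δ ^ 2 * (t - x) ^ 2 := by positivity
    linarith [hclose hnear]
  · have hfar : δ ^ 2 ≤ (t - x) ^ 2 := by
      rw [← sq_abs (t - x)]
      exact pow_le_pow_left₀ hδ.le (not_lt.1 hnear) 2
    calc |f t - f x| ≤ 2 * M := by linarith [abs_sub (f t) (f x)]
      _ = 2 * M / δ ^ 2 * δ ^ 2 := by field_simp
      _ ≤ 2 * M / δ ^ 2 * (t - x) ^ 2 := by gcongr
      _ ≤ ε + 2 * M / δ ^ 2 * (t - x) ^ 2 := le_add_of_nonneg_left hε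

variable {μ : Measure ℝ}

lemma abs_integral_mul_sub_le {k f : ℝ → ℝ} {x ε c : ℝ} (hk_nonneg : ∀ᵐ t ∂μ, 0 ≤ k t)
    (hk_int : Integrable k μ) (hk_one : ∫ t, k t ∂μ = 1)
    (hk_sq_int : Integrable (fun t => (t - x) ^ 2 * k t) μ)
    (hkf_int : Integrable (fun t => k t * f t) μ)
    (hf : ∀ᵐ t ∂μ, |f t - f x| ≤ ε + c * (t - x) ^ 2) :
    |∫ t, k t * f t ∂μ - f x| ≤ ε + c * ∫ t, (t - x) ^ 2 * k t ∂μ := by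
  have hsub : ∫ t, k t * f t ∂μ - f x = ∫ t, k t * (f t - f x) ∂μ := by
    simp_rw [mul_sub]
    rw [integral_sub hkf_int (hk_int.mul_const _), integral_mul_const, hk_one, one_mul]
  have hbound : ∀ᵐ t ∂μ, ‖k t * (f t - f x)‖ ≤ ε * k t + c * ((t - x) ^ 2 * k t) := by
    filter_upwards [hk_nonneg, hf] with t hkt hft
    rw [norm_mul, norm_of_nonneg hkt, Real.norm_eq_abs]
    nlinarith
  calc |∫ t, k t * f t ∂μ - f x|
      ≤ ∫ t, (ε * k t + c * ((t - x) ^ 2 * k t)) ∂μ := by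
        rw [hsub]
        exact norm_integral_le_of_norm_le ((hk_int.const_mul ε).add (hk_sq_int.const_mul c)) hbound
    _ = ε + c * ∫ t, (t - x) ^ 2 * k t ∂μ := by
        rw [integral_add (hk_int.const_mul ε) (hk_sq_int.const_mul c), integral_const_mul,
          integral_const_mul, hk_one, mul_one]

theorem tendsto_integral_mul_of_integral_sub_sq_mul_tendsto_zero {ι : Type*} {l : Filter ι}
    {k : ι → ℝ → ℝ} {f : ℝ → ℝ} {s : Set ℝ} {x M : ℝ} (hμs : ∀ᵐ t ∂μ, t ∈ s) (hx : x ∈ s)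
    (hfx : ContinuousWithinAt f s x) (hfM : ∀ t ∈ s, |f t| ≤ M) (hf : AEStronglyMeasurable f μ)
    (hk_nonneg : ∀ᶠ i in l, ∀ᵐ t ∂μ, 0 ≤ k i t) (hk_int : ∀ᶠ i in l, Integrable (k i) μ)
    (hk_one : ∀ᶠ i in l, ∫ t, k i t ∂μ = 1)
    (hk_sq_int : ∀ᶠ i in l, Integrable (fun t => (t - x) ^ 2 * k i t) μ)
    (hk_sq : Tendsto (fun i => ∫ t, (t - x) ^ 2 * k i t ∂μ) l (𝓝 0)) :
    Tendsto (fun i => ∫ t, k i t * f t ∂μ) l (𝓝 (f x)) := by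
  rw [Metric.tendsto_nhds]
  intro ε hε
  obtain ⟨δ, hδ, hclose⟩ := Metric.continuousWithinAt_iff.1 hfx (ε / 2) (half_pos hε)
  have hf_le : ∀ᵐ t ∂μ, |f t - f x| ≤ ε / 2 + 2 * M / δ ^ 2 * (t - x) ^ 2 :=
    hμs.mono fun t ht => abs_sub_le_add_mul_sq (hfM t ht) (hfM x hx) (half_pos hε).le hδ
      fun h => (hclose ht h).le
  have hsmall : ∀ᶠ i in l, 2 * M / δ ^ 2 * ∫ t, (t - x) ^ 2 * k i t ∂μ < ε / 2 := by
    have := hk_sq.const_mul (2 * M / δ ^ 2)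
    rw [mul_zero] at this
    exact this.eventually (gt_mem_nhds (half_pos hε))
  filter_upwards [hk_nonneg, hk_int, hk_one, hk_sq_int, hsmall] with i hi_nonneg hi_int hi_one
    hi_sq_int hi_small
  have hkf_int : Integrable (fun t => k i t * f t) μ :=
    hi_int.mul_bdd hf (hμs.mono fun t ht => (hfM t ht : ‖f t‖ ≤ M))
  rw [Real.dist_eq]
  linarith [abs_integral_mul_sub_le hi_nonneg hi_int hi_one hi_sq_int hkf_int hf_le]

end ApproximateIdentity

theorem post_inversion
    (f : ℝ → ℝ) (hf : ContinuousOn f (Ici 0)) (M : ℝ)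
    (hbdd : ∀ x : ℝ, 0 ≤ x → |f x| ≤ M)
    (x : ℝ) (hx : 0 < x) :
    Filter.Tendsto
      (fun m : ℕ => ((-1) ^ m / m.factorial : ℝ) * ((m : ℝ) / x) ^ (m + 1) *
        iteratedDeriv m
          (fun s : ℝ => ∫ t : ℝ in Ioi 0, Real.exp (-s * t) * f t) ((m : ℝ) / x))
      Filter.atTop (nhds (f x)) := by
  have hpos : ∀ᵐ t ∂volume.restrict (Ioi 0), t ∈ Ici (0 : ℝ) :=
    (ae_restrict_mem measurableSet_Ioi).mono fun _ ht => Ioi_subset_Ici_self ht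
  have hf_meas : AEStronglyMeasurable f (volume.restrict (Ioi 0)) :=
    (hf.mono Ioi_subset_Ici_self).aestronglyMeasurable measurableSet_Ioi
  have hf_bdd : ∀ᵐ t ∂volume.restrict (Ioi 0), ‖f t‖ ≤ M := hpos.mono hbdd
  have hrate : ∀ᶠ m : ℕ in atTop, 0 < (m : ℝ) / x :=
    (eventually_gt_atTop 0).mono fun m hm => div_pos (Nat.cast_pos.2 hm) hx
  have hkernel : ∀ᶠ m : ℕ in atTop, ∫ t in Ioi 0, gammaKernel m (m / x) t * f t
      = ((-1) ^ m / m ! : ℝ) * ((m : ℝ) / x) ^ (m + 1) *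
        iteratedDeriv m (fun s => ∫ t in Ioi 0, exp (-s * t) * f t) ((m : ℝ) / x) := by
    filter_upwards [hrate] with m hm
    rw [integral_gammaKernel_mul, iteratedDeriv_laplace hf_meas hf_bdd m hm]
    have hsign : ((-1 : ℝ) ^ m) ^ 2 = 1 := by rw [← pow_mul, pow_mul', neg_one_sq, one_pow]
    linear_combination (-((m / x : ℝ) ^ (m + 1) / m ! *
      ∫ t in Ioi 0, t ^ m * exp (-(m / x * t)) * f t)) * hsign
  refine Tendsto.congr' hkernel (tendsto_integral_mul_of_integral_sub_sq_mul_tendsto_zero hpos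
    (mem_Ici.2 hx.le) (hf x hx.le) hbdd hf_meas
    (hrate.mono fun m hm => hpos.mono fun t ht => gammaKernel_nonneg hm.le ht)
    (hrate.mono fun m hm => integrableOn_gammaKernel hm)
    (hrate.mono fun m hm => integral_gammaKernel hm)
    (hrate.mono fun m hm => integrableOn_sub_sq_mul_gammaKernel x hm)
    (tendsto_integral_sub_sq_mul_gammaKernel hx))
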